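/- arXiv:1712.00859 — 2 statements merged into one kernel-verified Lean document; each statement's English description precedes it below -/
import Mathlib

section
/- Let μ be a completely mixed product-form CPT correlated equilibrium, i.e., μ ∈ I ∩ C_CPT with μ_i(s_i) > 0 for every player i and every s_i ∈ S_i. Then all the equilibrium incentive inequalities hold with equality: for every player i and every pair of strategies s_i, d_i ∈ S_i, V_i^{r_i(μ)}((μ_{−i}(s_{−i}))_{s_{−i}}, (h_i(s_i, s_{−i}))_{s_{−i}}) = V_i^{r_i(μ)}((μ_{−i}(s_{−i}))_{s_{−i}}, (h_i(d_i, s_{−i}))_{s_{−i}}), where μ_{−i}(s_{−i}) = Π_{j≠i} μ_j(s_j). -/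
/-- The decision-weight form of the CPT value of the prospect `(p, z)`, indexed by
a finite type `κ`, with reference point `r`, value function `v`, probability
weighting functions `wp` (for gains) and `wm` (for losses), computed using a
bijection `a` enumerating the indices so that `z` is decreasing. -/
noncomputable def cptVal {κ : Type*} [Fintype κ] (wp wm v : ℝ → ℝ) (r : ℝ)
    (p z : κ → ℝ) (a : Fin (Fintype.card κ) ≃ κ) : ℝ :=
  ∑ j : Fin (Fintype.card κ),
    (if r ≤ z (a j) then
        wp (∑ k ∈ Finset.Iic j, p (a k)) - wp (∑ k ∈ Finset.Iio j, p (a k))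
      else
        wm (∑ k ∈ Finset.Ici j, p (a k)) - wm (∑ k ∈ Finset.Ioi j, p (a k)))
      * v (z (a j))

/-- A canonical enumeration of `κ` ordering `z` decreasingly. -/
noncomputable def sortingEquiv {κ : Type*} [Fintype κ] (z : κ → ℝ) :
    Fin (Fintype.card κ) ≃ κ :=
  (Tuple.sort (fun j => -z ((Fintype.equivFin κ).symm j)) : Equiv.Perm _).trans
    (Fintype.equivFin κ).symm

/-- The CPT value `V^r(p,z)` (independent of the choice of decreasing enumeration). -/
noncomputable def CPT {κ : Type*} [Fintype κ] (wp wm v : ℝ → ℝ) (r : ℝ)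
    (p z : κ → ℝ) : ℝ :=
  cptVal wp wm v r p z (sortingEquiv z)

/-- `μ` is a probability distribution on the finite type `κ`. -/
def IsProbDist {κ : Type*} [Fintype κ] (μ : κ → ℝ) : Prop :=
  (∀ s, 0 ≤ μ s) ∧ ∑ s, μ s = 1

/-- The joint strategy obtained when player `i` plays `si` and the other players
play according to `s'`. -/
def combine {ι : Type*} [DecidableEq ι] {S : ι → Type*} (i : ι) (si : S i)
    (s' : ∀ j : {j // j ≠ i}, S j) : ∀ j, S j :=
  fun j => if h : j = i then cast (congrArg S h.symm) si else s' ⟨j, h⟩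

/-- The marginal probability `μ_i(s_i)` of player `i` playing `si` under the joint
distribution `μ`. -/
noncomputable def marginal {ι : Type*} [Fintype ι] [DecidableEq ι] {S : ι → Type*}
    [∀ j, Fintype (S j)] [∀ j, DecidableEq (S j)]
    (μ : (∀ j, S j) → ℝ) (i : ι) (si : S i) : ℝ :=
  ∑ s' : ∀ j : {j // j ≠ i}, S j, μ (combine i si s')

/-- The conditional distribution `μ_{-i}^{s_i}` on the joint strategies of the
players other than `i`, given that player `i` is told to play `si`. -/
noncomputable def condDist {ι : Type*} [Fintype ι] [DecidableEq ι] {S : ι → Type*}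
    [∀ j, Fintype (S j)] [∀ j, DecidableEq (S j)]
    (μ : (∀ j, S j) → ℝ) (i : ι) (si : S i) :
    (∀ j : {j // j ≠ i}, S j) → ℝ :=
  fun s' => μ (combine i si s') / marginal μ i si

/-- `μ` is a CPT correlated equilibrium of the game with payoff functions `pay`,
probability weighting functions `wp i`, `wm i`, value function family `v i r`,
and reference functions `ref i`. -/
noncomputable def IsCPTCorrEq {ι : Type*} [Fintype ι] [DecidableEq ι] {S : ι → Type*}
    [∀ j, Fintype (S j)] [∀ j, DecidableEq (S j)]
    (pay : ∀ _ : ι, (∀ j, S j) → ℝ) (wp wm : ι → ℝ → ℝ) (v : ι → ℝ → ℝ → ℝ)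
    (ref : ι → ((∀ j, S j) → ℝ) → ℝ) (μ : (∀ j, S j) → ℝ) : Prop :=
  IsProbDist μ ∧
    ∀ (i : ι) (si di : S i), 0 < marginal μ i si →
      CPT (wp i) (wm i) (v i (ref i μ)) (ref i μ) (condDist μ i si)
          (fun s' => pay i (combine i di s'))
        ≤ CPT (wp i) (wm i) (v i (ref i μ)) (ref i μ) (condDist μ i si)
          (fun s' => pay i (combine i si s'))

/-- The product distribution `μ_{-i}` on the joint strategies of the players other
than `i`, `μ_{-i}(s_{-i}) = ∏_{j ≠ i} μ_j(s_j)`, where `μ_j` is the marginal of `μ`. -/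
noncomputable def prodOthers {ι : Type*} [Fintype ι] [DecidableEq ι] {S : ι → Type*}
    [∀ j, Fintype (S j)] [∀ j, DecidableEq (S j)]
    (μ : (∀ j, S j) → ℝ) (i : ι) : (∀ j : {j // j ≠ i}, S j) → ℝ :=
  fun s' => ∏ j : {j // j ≠ i}, marginal μ (j : ι) (s' j)

@[simp]
lemma combine_apply_self {ι : Type*} [DecidableEq ι] {S : ι → Type*} (i : ι) (si : S i)
    (s' : ∀ j : {j // j ≠ i}, S j) : combine i si s' i = si := by
  simp [combine]

@[simp]
lemma combine_apply_ne {ι : Type*} [DecidableEq ι] {S : ι → Type*} (i : ι) (si : S i)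
    (s' : ∀ j : {j // j ≠ i}, S j) (j : {j // j ≠ i}) : combine i si s' j = s' j := by
  simp [combine, j.2]

section ProductForm

variable {ι : Type*} [Fintype ι] [DecidableEq ι] {S : ι → Type*}
  [∀ j, Fintype (S j)] [∀ j, DecidableEq (S j)]

lemma apply_combine_of_product_form {μ : (∀ j, S j) → ℝ}
    (hprod : ∀ s : ∀ j, S j, μ s = ∏ i, marginal μ i (s i))
    (i : ι) (si : S i) (s' : ∀ j : {j // j ≠ i}, S j) :
    μ (combine i si s') = marginal μ i si * prodOthers μ i s' := by
  rw [hprod, Fintype.prod_eq_mul_prod_subtype_ne _ i]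
  simp only [combine_apply_self, combine_apply_ne, prodOthers]

lemma condDist_eq_prodOthers_of_product_form {μ : (∀ j, S j) → ℝ}
    (hprod : ∀ s : ∀ j, S j, μ s = ∏ i, marginal μ i (s i))
    {i : ι} {si : S i} (hsi : marginal μ i si ≠ 0) :
    condDist μ i si = prodOthers μ i := by
  funext s'
  rw [condDist, apply_combine_of_product_form hprod, mul_div_cancel_left₀ _ hsi]

end ProductForm

theorem completely_mixed_cpt_nash_indifference_general
    {ι : Type*} [Fintype ι] [DecidableEq ι] {S : ι → Type*}
    [∀ j, Fintype (S j)] [∀ j, DecidableEq (S j)]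
    (pay : ∀ _ : ι, (∀ j, S j) → ℝ) (wp wm : ι → ℝ → ℝ) (v : ι → ℝ → ℝ → ℝ)
    (ref : ι → ((∀ j, S j) → ℝ) → ℝ)
    (μ : (∀ j, S j) → ℝ)
    (hCPT : IsCPTCorrEq pay wp wm v ref μ)
    (hprod : ∀ s : ∀ j, S j, μ s = ∏ i, marginal μ i (s i))
    (hmixed : ∀ (i : ι) (si : S i), 0 < marginal μ i si) :
    ∀ (i : ι) (si di : S i),
      CPT (wp i) (wm i) (v i (ref i μ)) (ref i μ) (prodOthers μ i)
          (fun s' => pay i (combine i si s'))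
        = CPT (wp i) (wm i) (v i (ref i μ)) (ref i μ) (prodOthers μ i)
          (fun s' => pay i (combine i di s')) := by
  intro i si di
  have hsi := hCPT.2 i si di (hmixed i si)
  have hdi := hCPT.2 i di si (hmixed i di)
  rw [condDist_eq_prodOthers_of_product_form hprod (hmixed i si).ne'] at hsi
  rw [condDist_eq_prodOthers_of_product_form hprod (hmixed i di).ne'] at hdi
  exact le_antisymm hdi hsi

/-- if `μ` is a completely mixed product-form CPT correlated
equilibrium, then all the equilibrium incentive inequalities hold with equality:
for every player `i` and every pair of strategies `si, di`, the CPT values of the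
prospects faced by following `si` and by deviating to `di` (against the product
distribution `μ_{-i}`) coincide. -/
theorem completely_mixed_cpt_nash_indifference
    {ι : Type*} [Fintype ι] [DecidableEq ι] {S : ι → Type*}
    [∀ j, Fintype (S j)] [∀ j, DecidableEq (S j)]
    (pay : ∀ _ : ι, (∀ j, S j) → ℝ) (wp wm : ι → ℝ → ℝ) (v : ι → ℝ → ℝ → ℝ)
    (ref : ι → ((∀ j, S j) → ℝ) → ℝ)
    (hcard : ∀ i, 2 ≤ Fintype.card (S i))
    (hwp : ∀ i, ContinuousOn (wp i) (Set.Icc 0 1) ∧ StrictMonoOn (wp i) (Set.Icc 0 1)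
      ∧ wp i 0 = 0 ∧ wp i 1 = 1)
    (hwm : ∀ i, ContinuousOn (wm i) (Set.Icc 0 1) ∧ StrictMonoOn (wm i) (Set.Icc 0 1)
      ∧ wm i 0 = 0 ∧ wm i 1 = 1)
    (hv : ∀ i, Continuous (Function.uncurry (v i))
      ∧ ∀ r : ℝ, StrictMono (v i r) ∧ v i r r = 0)
    (href : ∀ i, ContinuousOn (ref i) {μ : (∀ j, S j) → ℝ | IsProbDist μ})
    (μ : (∀ j, S j) → ℝ)
    (hCPT : IsCPTCorrEq pay wp wm v ref μ)
    (hprod : ∀ s : ∀ j, S j, μ s = ∏ i, marginal μ i (s i))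
    (hmixed : ∀ (i : ι) (si : S i), 0 < marginal μ i si) :
    ∀ (i : ι) (si di : S i),
      CPT (wp i) (wm i) (v i (ref i μ)) (ref i μ) (prodOthers μ i)
          (fun s' => pay i (combine i si s'))
        = CPT (wp i) (wm i) (v i (ref i μ)) (ref i μ) (prodOthers μ i)
          (fun s' => pay i (combine i di s')) :=
  completely_mixed_cpt_nash_indifference_general pay wp wm v ref μ hCPT hprod hmixed
end

section
/- The set C_CPT of CPT correlated equilibria is a proper subset of the simplex Δ^{|S|−1} if and only if the game Γ is non-trivial; equivalently, C_CPT = Δ^{|S|−1} if and only if h_i(s) = h_i(d_i, s_{−i}) for every player i, every s ∈ S, and every d_i ∈ S_i. -/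
/-!
Every point mass `δ_t` is a probability distribution. Under `δ_t`, a player told to play `t i`
knows the others play `t₋ᵢ`, and the CPT value of a sure prospect is just the value of its
outcome, because the decision weights telescope to `w(1) - w(0) = 1` at that outcome and vanish
elsewhere. Strict monotonicity of the value function then turns the equilibrium condition of
`δ_t` into `h_i(d_i, t₋ᵢ) ≤ h_i(t)`; applying it at `t` and at `(d_i, t₋ᵢ)` gives equality.
Conversely, in a trivial game both prospects in the equilibrium condition coincide.
-/

lemma cptVal_single {κ : Type*} [Fintype κ] [DecidableEq κ] {wp wm : ℝ → ℝ}
    (hwp0 : wp 0 = 0) (hwp1 : wp 1 = 1) (hwm0 : wm 0 = 0) (hwm1 : wm 1 = 1)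
    (v : ℝ → ℝ) (r : ℝ) (z : κ → ℝ) (k₀ : κ) (a : Fin (Fintype.card κ) ≃ κ) :
    cptVal wp wm v r (Pi.single k₀ 1) z a = v (z k₀) := by
  have hsum : ∀ s : Finset (Fin (Fintype.card κ)),
      ∑ k ∈ s, (Pi.single k₀ 1 : κ → ℝ) (a k) = if a.symm k₀ ∈ s then 1 else 0 := by
    intro s
    simp [Pi.single_apply, ← Equiv.eq_symm_apply]
  rw [cptVal, Finset.sum_eq_single (a.symm k₀)]
  · simp [hsum, hwp0, hwp1, hwm0, hwm1]
  · intro j _ hj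
    rcases hj.lt_or_gt with h | h
    · simp [hsum, h, h.le, h.not_ge, h.not_gt]
    · simp [hsum, h, h.le, h.not_ge, h.not_gt]
  · simp

lemma isProbDist_single {κ : Type*} [Fintype κ] [DecidableEq κ] (k : κ) :
    IsProbDist (Pi.single k (1 : ℝ)) :=
  ⟨fun s => by by_cases h : s = k <;> simp [h], by simp⟩

section Combine

variable {ι : Type*} [DecidableEq ι] {S : ι → Type*}

lemma update_combine (i : ι) (si di : S i) (s' : ∀ j : {j // j ≠ i}, S j) :
    Function.update (combine i si s') i di = combine i di s' := by
  funext j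
  by_cases h : j = i
  · subst h; simp [combine]
  · simp [combine, h]

lemma combine_restrict (i : ι) (t : ∀ j, S j) :
    combine i (t i) (Subtype.restrict (· ≠ i) t) = t := by
  funext j
  by_cases h : j = i
  · subst h; simp [combine]
  · simp [combine, h]

lemma combine_eq_iff (i : ι) (t : ∀ j, S j) (s' : ∀ j : {j // j ≠ i}, S j) :
    combine i (t i) s' = t ↔ s' = Subtype.restrict (· ≠ i) t := by
  refine ⟨fun h => ?_, fun h => h ▸ combine_restrict i t⟩
  funext j
  simpa [combine, j.2] using congrFun h j.1

lemma single_combine_self [Fintype ι] [∀ j, DecidableEq (S j)] (t : ∀ j, S j) (i : ι)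
    (s' : ∀ j : {j // j ≠ i}, S j) :
    (Pi.single t 1 : (∀ j, S j) → ℝ) (combine i (t i) s')
      = (Pi.single (Subtype.restrict (· ≠ i) t) 1 : (∀ j : {j // j ≠ i}, S j) → ℝ) s' := by
  simp only [Pi.single_apply, combine_eq_iff]

end Combine

section Equilibrium

variable {ι : Type*} [Fintype ι] [DecidableEq ι] {S : ι → Type*}
  [∀ j, Fintype (S j)] [∀ j, DecidableEq (S j)]

lemma marginal_single_self (t : ∀ j, S j) (i : ι) :
    marginal (Pi.single t 1) i (t i) = 1 := by
  simp [marginal, single_combine_self]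

lemma condDist_single_self (t : ∀ j, S j) (i : ι) :
    condDist (Pi.single t 1) i (t i) = Pi.single (Subtype.restrict (· ≠ i) t) 1 := by
  funext s'
  rw [condDist, marginal_single_self, div_one, single_combine_self]

lemma IsCPTCorrEq.pay_update_le {pay : ∀ _ : ι, (∀ j, S j) → ℝ} {wp wm : ι → ℝ → ℝ}
    {v : ι → ℝ → ℝ → ℝ} {ref : ι → ((∀ j, S j) → ℝ) → ℝ} {t : ∀ j, S j}
    (h : IsCPTCorrEq pay wp wm v ref (Pi.single t 1)) {i : ι}
    (hwp0 : wp i 0 = 0) (hwp1 : wp i 1 = 1) (hwm0 : wm i 0 = 0) (hwm1 : wm i 1 = 1)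
    (hv : StrictMono (v i (ref i (Pi.single t 1)))) (d : S i) :
    pay i (Function.update t i d) ≤ pay i t := by
  have hle := h.2 i (t i) d (by rw [marginal_single_self]; exact one_pos)
  rw [condDist_single_self, CPT, CPT, cptVal_single hwp0 hwp1 hwm0 hwm1,
    cptVal_single hwp0 hwp1 hwm0 hwm1, hv.le_iff_le] at hle
  rwa [← update_combine i (t i) d, combine_restrict] at hle

lemma isCPTCorrEq_of_pay_update_eq {pay : ∀ _ : ι, (∀ j, S j) → ℝ} {wp wm : ι → ℝ → ℝ}
    {v : ι → ℝ → ℝ → ℝ} {ref : ι → ((∀ j, S j) → ℝ) → ℝ} {μ : (∀ j, S j) → ℝ}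
    (htriv : ∀ (i : ι) (s : ∀ j, S j) (di : S i), pay i (Function.update s i di) = pay i s)
    (hμ : IsProbDist μ) : IsCPTCorrEq pay wp wm v ref μ := by
  refine ⟨hμ, fun i si di _ => le_of_eq ?_⟩
  congr 1
  funext s'
  rw [← update_combine i si di, htriv]

end Equilibrium

theorem cpt_correlated_eq_whole_simplex_iff_trivial_general
    {ι : Type*} [Fintype ι] [DecidableEq ι] {S : ι → Type*}
    [∀ j, Fintype (S j)] [∀ j, DecidableEq (S j)]
    (pay : ∀ _ : ι, (∀ j, S j) → ℝ) (wp wm : ι → ℝ → ℝ) (v : ι → ℝ → ℝ → ℝ)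
    (ref : ι → ((∀ j, S j) → ℝ) → ℝ)
    (hwp : ∀ i, ContinuousOn (wp i) (Set.Icc 0 1) ∧ StrictMonoOn (wp i) (Set.Icc 0 1)
      ∧ wp i 0 = 0 ∧ wp i 1 = 1)
    (hwm : ∀ i, ContinuousOn (wm i) (Set.Icc 0 1) ∧ StrictMonoOn (wm i) (Set.Icc 0 1)
      ∧ wm i 0 = 0 ∧ wm i 1 = 1)
    (hv : ∀ i, Continuous (Function.uncurry (v i))
      ∧ ∀ r : ℝ, StrictMono (v i r) ∧ v i r r = 0) :
    {μ : (∀ j, S j) → ℝ | IsCPTCorrEq pay wp wm v ref μ}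
        = {μ : (∀ j, S j) → ℝ | IsProbDist μ}
      ↔ ∀ (i : ι) (s : ∀ j, S j) (di : S i),
          pay i (Function.update s i di) = pay i s := by
  constructor
  · intro hset i s di
    have hsingle (t : ∀ j, S j) : IsCPTCorrEq pay wp wm v ref (Pi.single t 1) := by
      have : Pi.single t 1 ∈ {μ : (∀ j, S j) → ℝ | IsProbDist μ} := isProbDist_single t
      rwa [← hset] at this
    have hdev (t : ∀ j, S j) (d : S i) : pay i (Function.update t i d) ≤ pay i t :=
      (hsingle t).pay_update_le (hwp i).2.2.1 (hwp i).2.2.2 (hwm i).2.2.1 (hwm i).2.2.2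
        ((hv i).2 _).1 d
    refine le_antisymm (hdev s di) ?_
    simpa using hdev (Function.update s i di) (s i)
  · intro htriv
    ext μ
    exact ⟨And.left, isCPTCorrEq_of_pay_update_eq htriv⟩

/-- the set `C_CPT` of CPT correlated equilibria equals the whole
simplex `Δ^{|S|−1}` if and only if the game is trivial, i.e.
`h_i(s) = h_i(d_i, s_{−i})` for every player `i`, every joint strategy `s`, and
every deviation `d_i`.  (Equivalently, `C_CPT` is a proper subset of the simplex
iff the game is non-trivial.) -/
theorem cpt_correlated_eq_whole_simplex_iff_trivial
    {ι : Type*} [Fintype ι] [DecidableEq ι] {S : ι → Type*}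
    [∀ j, Fintype (S j)] [∀ j, DecidableEq (S j)]
    (pay : ∀ _ : ι, (∀ j, S j) → ℝ) (wp wm : ι → ℝ → ℝ) (v : ι → ℝ → ℝ → ℝ)
    (ref : ι → ((∀ j, S j) → ℝ) → ℝ)
    (hcard : ∀ i, 2 ≤ Fintype.card (S i))
    (hwp : ∀ i, ContinuousOn (wp i) (Set.Icc 0 1) ∧ StrictMonoOn (wp i) (Set.Icc 0 1)
      ∧ wp i 0 = 0 ∧ wp i 1 = 1)
    (hwm : ∀ i, ContinuousOn (wm i) (Set.Icc 0 1) ∧ StrictMonoOn (wm i) (Set.Icc 0 1)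
      ∧ wm i 0 = 0 ∧ wm i 1 = 1)
    (hv : ∀ i, Continuous (Function.uncurry (v i))
      ∧ ∀ r : ℝ, StrictMono (v i r) ∧ v i r r = 0)
    (href : ∀ i, ContinuousOn (ref i) {μ : (∀ j, S j) → ℝ | IsProbDist μ}) :
    {μ : (∀ j, S j) → ℝ | IsCPTCorrEq pay wp wm v ref μ}
        = {μ : (∀ j, S j) → ℝ | IsProbDist μ}
      ↔ ∀ (i : ι) (s : ∀ j, S j) (di : S i),
          pay i (Function.update s i di) = pay i s :=
  cpt_correlated_eq_whole_simplex_iff_trivial_general pay wp wm v ref hwp hwm hv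
end
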